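/- arXiv:2105.09989 — 2 statements merged into one kernel-verified Lean document; each statement's English description precedes it below -/
import Mathlib

section
/- Let f : X × [0,1] → [0,1] and let L be a loss function over X that is f-proper. Then L is multi-group compatible; moreover, for every distribution D over X × Y, the single predictor h_D (defined by h_D(x) = f(x, p_D(x)) for x ∈ supp(D) and h_D(x) = 0 otherwise) satisfies L_{D_g}(h_D) ≤ L_{D_g}(h') for every g ⊆ X with Pr_D[x ∈ g] > 0 and every predictor h'. -/
/-!
Conditioning `D` on a group `g` only rescales the masses of the points of `g`, so
`p_{D_g} = p_D` on `g`, and `supp D_g ⊆ supp D ∩ g`. Hence `h_D` and `h_{D_g}` agree on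
`supp D_g`; by locality they have the same `D_g`-loss, and by `f`-properness `h_{D_g}` is
optimal for `D_g`. The single predictor `h_D` thus witnesses multi-group compatibility.
-/

open scoped ENNReal
open scoped Classical

noncomputable section

namespace MultiPAC

variable {X : Type*}

def Supp (D : PMF (X × Bool)) : Set X := {x | ∃ y, D (x, y) ≠ 0}

structure LossFunction (X : Type*) where
  loss : PMF (X × Bool) → (X → unitInterval) → unitInterval
  locality : ∀ (D : PMF (X × Bool)) (h h' : X → unitInterval),
    (∀ x ∈ Supp D, h x = h' x) → loss D h = loss D h'

def condOn (D : PMF (X × Bool)) (g : Set X) (hg : ∃ z : X × Bool, z.1 ∈ g ∧ D z ≠ 0) :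
    PMF (X × Bool) :=
  D.filter {z | z.1 ∈ g} hg

def empDist {m : ℕ} (hm : m ≠ 0) (S : Fin m → X × Bool) : PMF (X × Bool) :=
  haveI : NeZero m := ⟨hm⟩
  (PMF.uniformOfFintype (Fin m)).map S

def iidProb {α : Type*} {m : ℕ} (D : PMF α) (E : Set (Fin m → α)) : ℝ≥0∞ :=
  ∑' S : Fin m → α, E.indicator (fun T => ∏ i, D (T i)) S

/-- Boundedness by a polynomial in `1/ε`, `1/δ` and `log k`. -/
def PolyBound3 (M : ℝ → ℝ → ℕ → ℕ) : Prop :=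
  ∃ (C : ℝ) (n : ℕ), ∀ ε δ : ℝ, ε ∈ Set.Ioo (0:ℝ) 1 → δ ∈ Set.Ioo (0:ℝ) 1 → ∀ k : ℕ,
    (M ε δ k : ℝ) ≤ C * (1/ε + 1/δ + Real.log k + 1) ^ n

/-- `L` has the uniform convergence property with sample-complexity function `M`. -/
def UniformConvergenceWith (L : LossFunction X) (M : ℝ → ℝ → ℕ → ℕ) : Prop :=
  ∀ (H : Finset (X → unitInterval)) (ε δ : ℝ), ε ∈ Set.Ioo (0:ℝ) 1 → δ ∈ Set.Ioo (0:ℝ) 1 →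
    ∀ (D : PMF (X × Bool)) (m : ℕ) (hm : m ≠ 0), M ε δ H.card ≤ m →
      1 - ENNReal.ofReal δ ≤ iidProb D {S : Fin m → X × Bool |
        ∀ h ∈ H, |(L.loss (empDist hm S) h : ℝ) - (L.loss D h : ℝ)| ≤ ε}

/-- `L` has the uniform convergence property (w.r.t. finite classes). -/
def UniformConvergence (L : LossFunction X) : Prop :=
  ∃ M : ℝ → ℝ → ℕ → ℕ, PolyBound3 M ∧ UniformConvergenceWith L M

/-- `L` is unambiguous: on every distribution supported on a single point `x` there is a
unique value `v` such that every predictor taking value `v` at `x` minimizes the loss. -/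
def Unambiguous (L : LossFunction X) : Prop :=
  ∀ (D : PMF (X × Bool)) (x : X), Supp D = {x} →
    ∃! v : unitInterval, ∀ h : X → unitInterval, h x = v →
      ∀ h' : X → unitInterval, L.loss D h ≤ L.loss D h'

/-- `L` is multi-group compatible. -/
def MultiGroupCompatible (L : LossFunction X) : Prop :=
  ∀ (D : PMF (X × Bool)) (H : Set (X → unitInterval)) (G : Set (Set X)),
    ∃ hstar : X → unitInterval, ∀ g ∈ G, ∀ (hg : ∃ z : X × Bool, z.1 ∈ g ∧ D z ≠ 0),
      ∀ h' ∈ H, L.loss (condOn D g hg) hstar ≤ L.loss (condOn D g hg) h'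

/-- The probability mass that `D` puts on the event `x ∈ g`. -/
def groupMass (D : PMF (X × Bool)) (g : Set X) : ℝ≥0∞ := D.toOuterMeasure {z | z.1 ∈ g}

/-- The probability (over an i.i.d. size-`m` sample from `D` and the internal randomness of
the algorithm `A`) that the output predictor of `A` is in `Good`. -/
def algSuccess {m : ℕ} (D : PMF (X × Bool)) (A : (Fin m → X × Bool) → PMF (X → unitInterval))
    (Good : (X → unitInterval) → Prop) : ℝ≥0∞ :=
  ∑' S : Fin m → X × Bool, (∏ i, D (S i)) * (A S).toOuterMeasure {h | Good h}

/-- Boundedness by a polynomial in `1/ε`, `1/δ`, `1/γ`, `log s` and `log t`. -/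
def PolyBound5 (M : ℝ → ℝ → ℝ → ℕ → ℕ → ℕ) : Prop :=
  ∃ (C : ℝ) (n : ℕ), ∀ ε δ γ : ℝ, ε ∈ Set.Ioo (0:ℝ) 1 → δ ∈ Set.Ioo (0:ℝ) 1 →
    γ ∈ Set.Ioo (0:ℝ) 1 → ∀ s t : ℕ,
      (M ε δ γ s t : ℝ) ≤ C * (1/ε + 1/δ + 1/γ + Real.log s + Real.log t + 1) ^ n

/-- `L` is multi-group agnostic PAC learnable. -/
def MultiGroupLearnable (L : LossFunction X) : Prop :=
  ∃ (A : (m : ℕ) → (Fin m → X × Bool) → PMF (X → unitInterval))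
    (M : ℝ → ℝ → ℝ → ℕ → ℕ → ℕ), PolyBound5 M ∧
    ∀ (ε δ γ : ℝ), ε ∈ Set.Ioo (0:ℝ) 1 → δ ∈ Set.Ioo (0:ℝ) 1 → γ ∈ Set.Ioo (0:ℝ) 1 →
    ∀ (H : Finset (X → unitInterval)) (G : Finset (Set X)) (D : PMF (X × Bool)) (m : ℕ),
      M ε δ γ H.card G.card ≤ m →
      1 - ENNReal.ofReal δ ≤ algSuccess D (A m) (fun h =>
        ∀ g ∈ G, ENNReal.ofReal γ ≤ groupMass D g →
          ∀ (hg : ∃ z : X × Bool, z.1 ∈ g ∧ D z ≠ 0),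
          ∀ h' ∈ H, (L.loss (condOn D g hg) h : ℝ) ≤ (L.loss (condOn D g hg) h' : ℝ) + ε)

/-- `Pr_D[y = 1 ∣ X = x]`, as an element of `[0,1]`. -/
def condProb (D : PMF (X × Bool)) (x : X) : unitInterval :=
  ⟨(D (x, true)).toReal / ((D (x, true)).toReal + (D (x, false)).toReal), by
    constructor
    · positivity
    · rcases eq_or_lt_of_le (add_nonneg ENNReal.toReal_nonneg ENNReal.toReal_nonneg :
        (0:ℝ) ≤ (D (x, true)).toReal + (D (x, false)).toReal) with hz | hz
      · rw [← hz, div_zero]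
        exact zero_le_one
      · rw [div_le_one hz]
        exact le_add_of_nonneg_right ENNReal.toReal_nonneg⟩

/-- The predictor `h_D` : `h_D x = f (x, p_D x)` on the support of `D`, and `0` elsewhere. -/
def bayesPred (f : X × unitInterval → unitInterval) (D : PMF (X × Bool)) :
    X → unitInterval :=
  fun x => if x ∈ Supp D then f (x, condProb D x) else 0

/-- `L` is `f`-proper. -/
def FProper (f : X × unitInterval → unitInterval) (L : LossFunction X) : Prop :=
  ∀ (D : PMF (X × Bool)) (h : X → unitInterval), L.loss D (bayesPred f D) ≤ L.loss D h

theorem condProb_eq_of_apply_eq_mul {D D' : PMF (X × Bool)} {x : X} {c : ℝ≥0∞}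
    (hc0 : c ≠ 0) (hctop : c ≠ ⊤) (h : ∀ b, D' (x, b) = D (x, b) * c) :
    condProb D' x = condProb D x := by
  have hc : 0 < c.toReal := ENNReal.toReal_pos hc0 hctop
  apply Subtype.ext
  simp only [condProb, h, ENNReal.toReal_mul, ← add_mul, mul_div_mul_right _ _ hc.ne']

theorem condProb_condOn (D : PMF (X × Bool)) {g : Set X}
    (hg : ∃ z : X × Bool, z.1 ∈ g ∧ D z ≠ 0) {x : X} (hx : x ∈ g) :
    condProb (condOn D g hg) x = condProb D x := by
  refine condProb_eq_of_apply_eq_mul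
    (ENNReal.inv_ne_zero.2 (D.tsum_coe_indicator_ne_top {z : X × Bool | z.1 ∈ g}))
    (ENNReal.inv_ne_top.2 ?_) fun b => ?_
  · obtain ⟨z, hzg, hz⟩ := hg
    exact fun h0 => hz (by simpa [hzg] using ENNReal.tsum_eq_zero.1 h0 z)
  · have hxb : (x, b) ∈ {z : X × Bool | z.1 ∈ g} := hx
    exact (PMF.filter_apply ..).trans (by rw [Set.indicator_of_mem hxb])

theorem supp_condOn_subset (D : PMF (X × Bool)) {g : Set X}
    (hg : ∃ z : X × Bool, z.1 ∈ g ∧ D z ≠ 0) :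
    Supp (condOn D g hg) ⊆ Supp D ∩ g := by
  rintro x ⟨b, hb⟩
  obtain ⟨hxg, hxD⟩ := (PMF.filter_apply_ne_zero_iff (h := hg) (x, b)).1 hb
  exact ⟨⟨b, hxD⟩, hxg⟩

theorem bayesPred_condOn_eqOn (f : X × unitInterval → unitInterval) (D : PMF (X × Bool))
    {g : Set X} (hg : ∃ z : X × Bool, z.1 ∈ g ∧ D z ≠ 0) :
    Set.EqOn (bayesPred f D) (bayesPred f (condOn D g hg)) (Supp (condOn D g hg)) := by
  intro x hx
  obtain ⟨hxD, hxg⟩ := supp_condOn_subset D hg hx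
  simp only [bayesPred, if_pos hx, if_pos hxD, condProb_condOn D hg hxg]

theorem FProper.loss_condOn_bayesPred_le {f : X × unitInterval → unitInterval}
    {L : LossFunction X} (hf : FProper f L) (D : PMF (X × Bool)) (g : Set X)
    (hg : ∃ z : X × Bool, z.1 ∈ g ∧ D z ≠ 0) (h' : X → unitInterval) :
    L.loss (condOn D g hg) (bayesPred f D) ≤ L.loss (condOn D g hg) h' :=
  (L.locality _ _ _ (bayesPred_condOn_eqOn f D hg)).trans_le (hf _ h')

theorem fproper_implies_compatible_general {X : Type*}
    (f : X × unitInterval → unitInterval) (L : LossFunction X) (hf : FProper f L) :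
    MultiGroupCompatible L ∧
      ∀ (D : PMF (X × Bool)) (g : Set X) (hg : ∃ z : X × Bool, z.1 ∈ g ∧ D z ≠ 0)
        (h' : X → unitInterval),
        L.loss (condOn D g hg) (bayesPred f D) ≤ L.loss (condOn D g hg) h' :=
  ⟨fun D _ _ => ⟨bayesPred f D, fun g _ hg h' _ => hf.loss_condOn_bayesPred_le D g hg h'⟩,
    hf.loss_condOn_bayesPred_le⟩

/-- If `L` is `f`-proper then `L` is multi-group compatible; moreover, for
every distribution `D`, the single predictor `h_D = bayesPred f D` is simultaneously optimal
on `D` conditioned on every group `g` of positive probability, against every predictor. -/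
theorem fproper_implies_compatible {X : Type*} [Nonempty X]
    (f : X × unitInterval → unitInterval) (L : LossFunction X) (hf : FProper f L) :
    MultiGroupCompatible L ∧
      ∀ (D : PMF (X × Bool)) (g : Set X) (hg : ∃ z : X × Bool, z.1 ∈ g ∧ D z ≠ 0)
        (h' : X → unitInterval),
        L.loss (condOn D g hg) (bayesPred f D) ≤ L.loss (condOn D g hg) h' :=
  fproper_implies_compatible_general f L hf

end MultiPAC
end
end

section
/- Let L be a loss function over X that is unambiguous and multi-group compatible. Then for every distribution D over X × Y, the predictor h defined by h(x) = v_x for x ∈ supp(D) — where v_x is the unique value in [0,1] such that predictors taking value v_x at x minimize L on the singleton distribution D_x (D conditioned on X = x) — and h(x) = 0 for x ∉ supp(D), satisfies L_D(h) ≤ L_D(h') for every predictor h'. -/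
/-! Apply multi-group compatibility to the groups `X` and `{x}` for `x ∈ supp D`: this yields
one predictor `h*` minimizing the loss on `D` and on every `D_x`. Since `h` also minimizes the
loss on every `D_x`, unambiguity forces `h* x = h x` on `supp D`, and by locality
`L_D(h) = L_D(h*)`, which is minimal. -/

open scoped ENNReal
open scoped Classical

noncomputable section

namespace MultiPAC

variable {X : Type*}

/-- `D` conditioned on `X = x`, for `x` in the support of `D`. -/
def condOnPoint (D : PMF (X × Bool)) (x : X) (hx : x ∈ Supp D) : PMF (X × Bool) :=
  condOn D {x} (by obtain ⟨y, hy⟩ := hx; exact ⟨(x, y), rfl, hy⟩)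

def IsLossMinimizer (L : LossFunction X) (D : PMF (X × Bool)) (h : X → unitInterval) : Prop :=
  ∀ h' : X → unitInterval, L.loss D h ≤ L.loss D h'

lemma exists_mem_univ_ne_zero (D : PMF (X × Bool)) :
    ∃ z : X × Bool, z.1 ∈ (Set.univ : Set X) ∧ D z ≠ 0 :=
  let ⟨z, hz⟩ := D.support_nonempty
  ⟨z, Set.mem_univ _, hz⟩

lemma condOn_univ (D : PMF (X × Bool))
    (hg : ∃ z : X × Bool, z.1 ∈ (Set.univ : Set X) ∧ D z ≠ 0) :
    condOn D Set.univ hg = D := by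
  ext z
  simp [condOn, PMF.filter_apply]

lemma supp_condOnPoint (D : PMF (X × Bool)) (x : X) (hx : x ∈ Supp D) :
    Supp (condOnPoint D x hx) = {x} := by
  ext x'
  simp only [Supp, condOnPoint, condOn, ne_eq, Set.mem_ofPred_eq, Set.mem_singleton_iff]
  constructor
  · rintro ⟨y, hy⟩
    exact ((PMF.filter_apply_ne_zero_iff _ (x', y)).mp hy).1
  · rintro rfl
    obtain ⟨y, hy⟩ := hx
    exact ⟨y, (PMF.filter_apply_ne_zero_iff _ (x', y)).mpr ⟨rfl, hy⟩⟩

lemma LossFunction.isLossMinimizer_of_supp_eq_singleton (L : LossFunction X)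
    {D : PMF (X × Bool)} {x : X} (hD : Supp D = {x}) {h : X → unitInterval}
    (hmin : IsLossMinimizer L D h) {h₁ : X → unitInterval} (hx : h₁ x = h x) :
    IsLossMinimizer L D h₁ := by
  intro h'
  rw [L.locality D h₁ h (by rw [hD]; rintro _ rfl; exact hx)]
  exact hmin h'

lemma Unambiguous.apply_eq_of_isLossMinimizer {L : LossFunction X} (hL : Unambiguous L)
    {D : PMF (X × Bool)} {x : X} (hD : Supp D = {x}) {h₁ h₂ : X → unitInterval}
    (hmin₁ : IsLossMinimizer L D h₁) (hmin₂ : IsLossMinimizer L D h₂) : h₁ x = h₂ x := by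
  obtain ⟨v, -, huniq⟩ := hL D x hD
  have hv : ∀ {h : X → unitInterval}, IsLossMinimizer L D h → h x = v := fun hmin =>
    huniq _ fun _ hx => L.isLossMinimizer_of_supp_eq_singleton hD hmin hx
  rw [hv hmin₁, hv hmin₂]

lemma MultiGroupCompatible.exists_isLossMinimizer_and_condOnPoint {L : LossFunction X}
    (hL : MultiGroupCompatible L) (D : PMF (X × Bool)) :
    ∃ hs : X → unitInterval, IsLossMinimizer L D hs ∧
      ∀ (x : X) (hx : x ∈ Supp D), IsLossMinimizer L (condOnPoint D x hx) hs := by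
  obtain ⟨hs, hmin⟩ := hL D Set.univ (insert Set.univ ((fun x => {x}) '' Supp D))
  refine ⟨hs, fun h' => ?_, fun x hx h' => ?_⟩
  · have := hmin Set.univ (Set.mem_insert _ _) (exists_mem_univ_ne_zero D) h' (Set.mem_univ _)
    rwa [condOn_univ] at this
  · exact hmin {x} (Set.mem_insert_of_mem _ ⟨x, hx, rfl⟩) _ h' (Set.mem_univ _)

theorem pointwise_optimal_is_optimal_general {X : Type*} (L : LossFunction X)
    (hUnamb : Unambiguous L) (hComp : MultiGroupCompatible L)
    (D : PMF (X × Bool)) (h : X → unitInterval)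
    (hIn : ∀ (x : X) (hx : x ∈ Supp D), ∀ h₁ : X → unitInterval, h₁ x = h x →
      ∀ h₂ : X → unitInterval,
        L.loss (condOnPoint D x hx) h₁ ≤ L.loss (condOnPoint D x hx) h₂) :
    ∀ h' : X → unitInterval, L.loss D h ≤ L.loss D h' := by
  intro h'
  obtain ⟨hs, hs_min, hs_min_point⟩ := hComp.exists_isLossMinimizer_and_condOnPoint D
  have hagree : ∀ x ∈ Supp D, h x = hs x := fun x hx =>
    hUnamb.apply_eq_of_isLossMinimizer (supp_condOnPoint D x hx) (hIn x hx h rfl)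
      (hs_min_point x hx)
  calc L.loss D h = L.loss D hs := L.locality D h hs hagree
    _ ≤ L.loss D h' := hs_min h'

/-- Let `L` be unambiguous and multi-group compatible.  Then for every
distribution `D`, any predictor `h` that is `0` outside the support of `D` and whose value at
each `x ∈ supp(D)` is the (unique) loss-minimizing value for the singleton distribution `D_x`
(i.e. every predictor taking the value `h x` at `x` minimizes `L` on `D_x`) is a global loss
minimizer for `D`. -/
theorem pointwise_optimal_is_optimal {X : Type*} [Nonempty X] (L : LossFunction X)
    (hUnamb : Unambiguous L) (hComp : MultiGroupCompatible L)
    (D : PMF (X × Bool)) (h : X → unitInterval)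
    (hOut : ∀ x, x ∉ Supp D → h x = 0)
    (hIn : ∀ (x : X) (hx : x ∈ Supp D), ∀ h₁ : X → unitInterval, h₁ x = h x →
      ∀ h₂ : X → unitInterval,
        L.loss (condOnPoint D x hx) h₁ ≤ L.loss (condOnPoint D x hx) h₂) :
    ∀ h' : X → unitInterval, L.loss D h ≤ L.loss D h' :=
  pointwise_optimal_is_optimal_general L hUnamb hComp D h hIn

end MultiPAC
end
end
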